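/- Let G be a finite simple graph and let I be an independent set in G which has maximal incidence in G, i.e., I maximizes, over all independent sets of G, the number of edges of G having at least one end vertex in the set. Then the sparing number of G equals |E(G − I)|, the number of edges of G with no end vertex in I. -/

import Mathlib

/-
By Cauchy–Davenport, `|A + B| ≥ |A| + |B| - 1` for finite sets of naturals, so in a weak IASL no
edge joins two vertices with non-singleton labels: those vertices form an independent set `J`,
and the mono-indexed edges are exactly the edges avoiding `J`. Conversely, for an independent set
`I`, labelling the vertices of `I` by `{0, n}` and all other vertices by `{n}` (with distinct
positive `n`) is a weak IASL whose mono-indexed edges are the edges avoiding `I`. Hence the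
sparing number is the least number of edges avoiding an independent set, and this is attained by
an independent set of maximal incidence.
-/

open Pointwise

def IsWeakIASL {V : Type*} (G : SimpleGraph V) (f : V → Finset ℕ) : Prop :=
  Function.Injective f ∧ (∀ v, (f v).Nonempty) ∧
    ∀ u v, G.Adj u v →
      ((f u + f v).card = (f u).card ∨ (f u + f v).card = (f v).card)

def monoEdgeSet {V : Type*} (G : SimpleGraph V) (f : V → Finset ℕ) : Set (Sym2 V) :=
  {e | e ∈ G.edgeSet ∧ ∃ u v, e = s(u, v) ∧ (f u + f v).card = 1}

noncomputable def sparingNumber {V : Type*} (G : SimpleGraph V) : ℕ :=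
  sInf {n | ∃ f : V → Finset ℕ, IsWeakIASL G f ∧ (monoEdgeSet G f).ncard = n}

theorem Finset.card_add_eq_one_iff {α : Type*} [Add α] [IsCancelAdd α] [DecidableEq α]
    {s t : Finset α} (hs : s.Nonempty) (ht : t.Nonempty) :
    (s + t).card = 1 ↔ s.card = 1 ∧ t.card = 1 := by
  constructor
  · intro h
    exact ⟨le_antisymm (h ▸ card_le_card_add_right ht) hs.card_pos,
      le_antisymm (h ▸ card_le_card_add_left hs) ht.card_pos⟩
  · rintro ⟨hs1, ht1⟩
    obtain ⟨a, rfl⟩ := card_eq_one.mp hs1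
    obtain ⟨b, rfl⟩ := card_eq_one.mp ht1
    rw [singleton_add_singleton, card_singleton]

theorem Sym2.exists_eq_mk_and_and_iff {α : Type*} (p : α → Prop) (e : Sym2 α) :
    (∃ u v, e = s(u, v) ∧ p u ∧ p v) ↔ ∀ v ∈ e, p v := by
  induction e using Sym2.ind with
  | h a b =>
    constructor
    · rintro ⟨u, v, huv, hu, hv⟩
      rw [huv]
      simp [hu, hv]
    · intro h
      exact ⟨a, b, rfl, h a (Sym2.mem_mk_left a b), h b (Sym2.mem_mk_right a b)⟩

namespace SimpleGraph

variable {V : Type*} (G : SimpleGraph V)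

def edgesAvoiding (K : Set V) : Set (Sym2 V) := {e | e ∈ G.edgeSet ∧ ∀ v ∈ e, v ∉ K}

def edgesMeeting (K : Set V) : Set (Sym2 V) := {e | e ∈ G.edgeSet ∧ ∃ v ∈ e, v ∈ K}

theorem edgesAvoiding_eq_diff (K : Set V) :
    G.edgesAvoiding K = G.edgeSet \ G.edgesMeeting K := by
  ext e
  simp only [edgesAvoiding, edgesMeeting, Set.mem_ofPred_eq, Set.mem_sdiff, not_and, not_exists]
  tauto

theorem ncard_edgesAvoiding_le_of_ncard_edgesMeeting_le [Finite V] {I J : Set V}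
    (h : (G.edgesMeeting J).ncard ≤ (G.edgesMeeting I).ncard) :
    (G.edgesAvoiding I).ncard ≤ (G.edgesAvoiding J).ncard := by
  have hsub : ∀ K, G.edgesMeeting K ⊆ G.edgeSet := fun _ _ he => he.1
  simp only [edgesAvoiding_eq_diff, Set.ncard_sdiff (hsub _) (Set.toFinite _)]
  exact Nat.sub_le_sub_left h _

variable {G}

theorem monoEdgeSet_eq_edgesAvoiding {f : V → Finset ℕ} (hne : ∀ v, (f v).Nonempty) :
    monoEdgeSet G f = G.edgesAvoiding {v | (f v).card ≠ 1} := by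
  ext e
  simp only [monoEdgeSet, edgesAvoiding, Set.mem_ofPred_eq, not_not,
    Finset.card_add_eq_one_iff (hne _) (hne _), Sym2.exists_eq_mk_and_and_iff]

theorem IsWeakIASL.not_adj_of_card_ne_one {f : V → Finset ℕ} (hf : IsWeakIASL G f) :
    ∀ u ∈ {v | (f v).card ≠ 1}, ∀ v ∈ {v | (f v).card ≠ 1}, ¬ G.Adj u v := by
  intro u (hu : (f u).card ≠ 1) v (hv : (f v).card ≠ 1) hadj
  have hcd : (f u).card + (f v).card - 1 ≤ (f u + f v).card :=
    cauchy_davenport_add_of_linearOrder_isCancelAdd (hf.2.1 u) (hf.2.1 v)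
  have hu0 := (hf.2.1 u).card_pos
  have hv0 := (hf.2.1 v).card_pos
  rcases hf.2.2 u v hadj with h | h <;> omega

theorem exists_isWeakIASL_setOf_card_ne_one_eq [Countable V] {I : Set V}
    (hI : ∀ u ∈ I, ∀ v ∈ I, ¬ G.Adj u v) :
    ∃ f : V → Finset ℕ, IsWeakIASL G f ∧ {v | (f v).card ≠ 1} = I := by
  classical
  obtain ⟨enc, henc⟩ := exists_injective_nat V
  -- shifted by one so that `0` is left free for the second element of the labels on `I`
  let f : V → Finset ℕ := fun v => if v ∈ I then {0, enc v + 1} else {enc v + 1}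
  have hmem : ∀ v, enc v + 1 ∈ f v := fun v => by by_cases hv : v ∈ I <;> simp [f, hv]
  have hsub : ∀ v, f v ⊆ {0, enc v + 1} := fun v => by by_cases hv : v ∈ I <;> simp [f, hv]
  have hsingleton : ∀ v ∉ I, f v = {enc v + 1} := fun v hv => if_neg hv
  refine ⟨f, ⟨fun u v huv => ?_, fun v => ⟨_, hmem v⟩, fun u v hadj => ?_⟩, ?_⟩
  · have := hsub v (huv ▸ hmem u)
    simp only [Finset.mem_insert, Finset.mem_singleton, Nat.add_right_cancel_iff] at this
    exact henc (this.resolve_left (Nat.succ_ne_zero _))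
  · by_cases hv : v ∈ I
    · have hu : u ∉ I := fun hu => hI u hu v hv hadj
      right
      rw [hsingleton u hu, Finset.card_singleton_add]
    · left
      rw [hsingleton v hv, Finset.card_add_singleton]
  · ext v
    by_cases hv : v ∈ I <;> simp [f, hv]

end SimpleGraph

open SimpleGraph in
theorem sparing_number_eq_of_maximal_incidence {V : Type*} [Fintype V] (G : SimpleGraph V)
    (I : Set V) (hI : ∀ u ∈ I, ∀ v ∈ I, ¬ G.Adj u v)
    (hmax : ∀ J : Set V, (∀ u ∈ J, ∀ v ∈ J, ¬ G.Adj u v) →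
      {e | e ∈ G.edgeSet ∧ ∃ v ∈ e, v ∈ J}.ncard ≤
        {e | e ∈ G.edgeSet ∧ ∃ v ∈ e, v ∈ I}.ncard) :
    sparingNumber G = {e | e ∈ G.edgeSet ∧ ∀ v ∈ e, v ∉ I}.ncard := by
  change sparingNumber G = (G.edgesAvoiding I).ncard
  have hattained : (G.edgesAvoiding I).ncard ∈
      {n | ∃ f : V → Finset ℕ, IsWeakIASL G f ∧ (monoEdgeSet G f).ncard = n} := by
    obtain ⟨f, hf, hfI⟩ := exists_isWeakIASL_setOf_card_ne_one_eq hI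
    exact ⟨f, hf, by rw [monoEdgeSet_eq_edgesAvoiding hf.2.1, hfI]⟩
  refine le_antisymm (Nat.sInf_le hattained) (le_csInf ⟨_, hattained⟩ ?_)
  rintro n ⟨f, hf, rfl⟩
  rw [monoEdgeSet_eq_edgesAvoiding hf.2.1]
  exact G.ncard_edgesAvoiding_le_of_ncard_edgesMeeting_le (hmax _ hf.not_adj_of_card_ne_one)
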